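/- arXiv:2208.02603 — 5 statements merged into one kernel-verified Lean document; each statement's English description precedes it below -/
import Mathlib

section
/- Let α ∈ (0,1) and let f : ℝ → [0,∞) be measurable with ∑_{n∈ℤ} f(x−n) = 1 for almost every x ∈ ℝ and ∑_{n∈ℤ} f(x−nα) = 1/α for almost every x ∈ ℝ. Then |supp f| ≥ ⌈1/α⌉·α ≥ 2α, where |·| denotes Lebesgue measure on ℝ. -/
open MeasureTheory

noncomputable section

/-- The essential support of `f`: the smallest closed set outside of which `f` vanishes a.e. -/
def essSupp {α E : Type*} [TopologicalSpace α] [MeasureSpace α] [Zero E]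
    (f : α → E) : Set α :=
  ⋂₀ {S : Set α | IsClosed S ∧ ∀ᵐ x, x ∉ S → f x = 0}

/-!
Because `∑ₙ f(x - n) = 1` with `f ≥ 0`, we have `f ≤ 1` a.e., and then so is every translate
`f(· - nα)`. Hence for a.e. `x` the identity `∑ₙ f(x - nα) = 1/α` needs at least `⌈1/α⌉` nonzero
terms, i.e. at least `⌈1/α⌉` of the points `x - nα` lie in `supp f`. Integrating this count over
the fundamental domain `(0, α]` of `αℤ` gives exactly `|supp f|`, so `|supp f| ≥ ⌈1/α⌉ α`.
-/

open Set Function ENNReal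

theorem support_ae_le_essSupp {X E : Type*} [TopologicalSpace X] [SecondCountableTopology X]
    [MeasureSpace X] [Zero E] (f : X → E) : support f ≤ᵐ[volume] essSupp f := by
  obtain ⟨T, hTc, hTS, hT⟩ := TopologicalSpace.isOpen_sUnion_countable
    (compl '' {S : Set X | IsClosed S ∧ ∀ᵐ x, x ∉ S → f x = 0})
    (by rintro _ ⟨S, ⟨hS, -⟩, rfl⟩; exact hS.isOpen_compl)
  have hT_null : ∀ᵐ x, ∀ U ∈ T, x ∈ U → f x = 0 := by
    refine (ae_ball_iff hTc).2 fun U hU => ?_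
    obtain ⟨S, ⟨-, hS⟩, rfl⟩ := hTS hU
    exact hS
  filter_upwards [hT_null] with x hx hfx
  by_contra hxS
  obtain ⟨U, hU, hxU⟩ : x ∈ ⋃₀ T := by rw [hT, ← compl_sInter]; exact hxS
  exact hfx (hx U hU hxU)

theorem natCeil_tsum_le_encard_support {ι : Type*} {a : ι → ℝ} (ha : ∀ i, a i ≤ 1) :
    (⌈∑' i, a i⌉₊ : ℕ∞) ≤ (support a).encard := by
  rcases (support a).finite_or_infinite with hfin | hinf
  · rw [hfin.encard_eq_coe_toFinset_card, Nat.cast_le, Nat.ceil_le]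
    calc ∑' i, a i = ∑ i ∈ hfin.toFinset, a i := tsum_eq_sum (by simp)
      _ ≤ ∑ _i ∈ hfin.toFinset, 1 := Finset.sum_le_sum fun i _ => ha i
      _ = hfin.toFinset.card := by simp
  · simp [hinf.encard_eq]

theorem natCeil_tsum_le_tsum_indicator_support {ι : Type*} {a : ι → ℝ} (ha : ∀ i, a i ≤ 1) :
    (⌈∑' i, a i⌉₊ : ℝ≥0∞) ≤ ∑' i, (support a).indicator 1 i := by
  rw [← tsum_subtype]
  simp only [Pi.one_apply, ENNReal.tsum_set_one]
  exact_mod_cast natCeil_tsum_le_encard_support ha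

theorem lintegral_Ioc_tsum_comp_sub_int_mul {T : ℝ} (hT : 0 < T) (t : ℝ) {g : ℝ → ℝ≥0∞}
    (hg : Measurable g) :
    ∫⁻ x in Ioc t (t + T), ∑' n : ℤ, g (x - n * T) = ∫⁻ x, g x := by
  rw [lintegral_tsum (f := fun (n : ℤ) x => g (x - n * T))
      fun n => (hg.comp (measurable_sub_const _)).aemeasurable,
    (isAddFundamentalDomain_Ioc hT t volume).lintegral_eq_tsum' g]
  let e : ℤ ≃ AddSubgroup.zmultiples T := Equiv.ofBijective (fun n => ⟨n • T, n, rfl⟩)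
    ⟨fun m n h => by simpa [hT.ne'] using congrArg Subtype.val h,
      by rintro ⟨_, n, rfl⟩; exact ⟨n, rfl⟩⟩
  rw [← e.tsum_eq]
  refine tsum_congr fun n => lintegral_congr fun x => ?_
  simp [e, AddSubgroup.vadd_def, sub_eq_neg_add]

/-- If `α ∈ (0,1)` and the nonnegative measurable `f : ℝ → [0,∞)` tiles
with `ℤ` at level 1 and with `αℤ` at level `1/α`, then `|supp f| ≥ ⌈1/α⌉·α ≥ 2α`. -/
theorem support_length_lower_bound_two_lattices
    (α : ℝ) (hα : α ∈ Set.Ioo (0 : ℝ) 1)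
    (f : ℝ → ℝ) (hmeas : Measurable f) (hnn : ∀ x, 0 ≤ f x)
    (h1 : ∀ᵐ x : ℝ, (Summable fun n : ℤ => f (x - n)) ∧ ∑' n : ℤ, f (x - n) = 1)
    (h2 : ∀ᵐ x : ℝ, (Summable fun n : ℤ => f (x - n * α)) ∧
      ∑' n : ℤ, f (x - n * α) = 1 / α) :
    ENNReal.ofReal ((⌈1 / α⌉ : ℝ) * α) ≤ volume (essSupp f) ∧
      2 * α ≤ (⌈1 / α⌉ : ℝ) * α := by
  obtain ⟨hα0, hα1⟩ := hα
  have hf_le_one : ∀ᵐ x, f x ≤ 1 := by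
    filter_upwards [h1] with x hx
    simpa [hx.2] using hx.1.le_tsum 0 fun n _ => hnn _
  have hf_translates_le_one : ∀ᵐ x, ∀ n : ℤ, f (x - n * α) ≤ 1 := ae_all_iff.2 fun n =>
    (measurePreserving_sub_right volume _).quasiMeasurePreserving.ae hf_le_one
  have hcount : ∀ᵐ x, (⌈1 / α⌉₊ : ℝ≥0∞) ≤ ∑' n : ℤ, (support f).indicator 1 (x - n * α) := by
    filter_upwards [h2, hf_translates_le_one] with x hx hle
    rw [← hx.2]
    exact natCeil_tsum_le_tsum_indicator_support hle
  have hceil : ((⌈1 / α⌉ : ℤ) : ℝ) = ⌈1 / α⌉₊ :=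
    (natCast_ceil_eq_intCast_ceil (by positivity)).symm
  constructor
  · calc ENNReal.ofReal ((⌈1 / α⌉ : ℝ) * α)
          = ∫⁻ _ in Ioc 0 (0 + α), (⌈1 / α⌉₊ : ℝ≥0∞) := by
            rw [setLIntegral_const, Real.volume_Ioc, zero_add, sub_zero, hceil,
              ENNReal.ofReal_mul (Nat.cast_nonneg _), ENNReal.ofReal_natCast]
      _ ≤ ∫⁻ x in Ioc 0 (0 + α), ∑' n : ℤ, (support f).indicator 1 (x - n * α) :=
            lintegral_mono_ae (ae_restrict_of_ae hcount)
      _ = volume (support f) := by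
            rw [lintegral_Ioc_tsum_comp_sub_int_mul hα0 0 (measurable_one.indicator
              (measurableSet_support hmeas)), lintegral_indicator_one (measurableSet_support hmeas)]
      _ ≤ volume (essSupp f) := measure_mono_ae (support_ae_le_essSupp f)
  · have hceil_gt_one : (1 : ℤ) < ⌈1 / α⌉ :=
      Int.lt_ceil.2 (by exact_mod_cast one_lt_one_div hα0 hα1)
    gcongr
    exact_mod_cast hceil_gt_one
end
end

section
/- Let Λ = A·ℤ^d be a lattice in ℝ^d and let f ∈ L¹(ℝ^d) tile with Λ at level c. Then the Fourier transform f̂ vanishes at every nonzero point of the dual lattice: f̂(ξ) = 0 for all ξ ∈ Λ* \ {0}. -/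
open MeasureTheory Convolution

noncomputable section

/-- The lattice `A·ℤ^d` in `ℝ^d`. -/
def latticeOf {d : ℕ} (A : Matrix (Fin d) (Fin d) ℝ) :
    Set (EuclideanSpace ℝ (Fin d)) :=
  {x | ∃ m : Fin d → ℤ, x = A.mulVec (fun i => (m i : ℝ))}

/-- `f` tiles with the set `Λ` at level `c`: for a.e. `x` the series
`∑_{λ∈Λ} f(x-λ)` converges (absolutely, as summability in `ℝ` is absolute) to `c`. -/
def TilesAt {d : ℕ} (f : EuclideanSpace ℝ (Fin d) → ℝ)
    (Λ : Set (EuclideanSpace ℝ (Fin d))) (c : ℝ) : Prop :=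
  ∀ᵐ x : EuclideanSpace ℝ (Fin d),
    (Summable fun l : Λ => f (x - (l : EuclideanSpace ℝ (Fin d)))) ∧
    ∑' l : Λ, f (x - (l : EuclideanSpace ℝ (Fin d))) = c

/-- Iterated convolution `f₁ * f₂ * ⋯ * f_N` of a list of functions. -/
def convList {d : ℕ} :
    List (EuclideanSpace ℝ (Fin d) → ℝ) → (EuclideanSpace ℝ (Fin d) → ℝ)
  | [] => fun _ => 0
  | [g] => g
  | g :: gs => g ⋆[ContinuousLinearMap.lsmul ℝ ℝ] convList gs

/-! Unfolding the Fourier integral over a fundamental domain `D` of `Λ`, the character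
`x ↦ 𝐞 (-⟪x, ξ⟫)` is `Λ`-periodic for `ξ ∈ Λ*`, so the tiling identity gives
`f̂ ξ = c • ∫_D 𝐞 (-⟪x, ξ⟫)`. For `ξ ≠ 0` this integral vanishes: shifting `D` by a vector `v`
with `⟪v, ξ⟫ = -1/2` yields another fundamental domain, over which a periodic function has the
same integral, while the character changes sign under the shift. -/

open Function FourierTransform Matrix Submodule
open scoped Pointwise RealInnerProductSpace

namespace MeasureTheory.IsAddFundamentalDomain

theorem integral_eq_setIntegral_tsum {G α E : Type*} [AddGroup G] [Countable G] [AddAction G α]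
    [MeasurableSpace α] [MeasurableConstVAdd G α] {μ : Measure α} [VAddInvariantMeasure G α μ]
    [NormedAddCommGroup E] [NormedSpace ℝ E] {s : Set α} (h : IsAddFundamentalDomain G s μ)
    {f : α → E} (hf : Integrable f μ) : ∫ x, f x ∂μ = ∫ x in s, ∑' g : G, f (g +ᵥ x) ∂μ := by
  rw [h.integral_eq_tsum'' f hf, integral_tsum]
  · exact fun g ↦ (hf.1.comp_quasiMeasurePreserving
      (measurePreserving_vadd g μ).quasiMeasurePreserving).restrict
  · rw [← h.lintegral_eq_tsum'' (‖f ·‖ₑ)]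
    exact hf.2.ne

variable {V : Type*} [AddCommGroup V] [MeasurableSpace V] [MeasurableAdd V] {μ : Measure V}
  [μ.IsAddLeftInvariant] {L : AddSubgroup V} [Countable L] {s : Set V}

theorem setIntegral_eq_zero_of_antiperiodic {F : Type*} [NormedAddCommGroup F] [NormedSpace ℝ F]
    (h : IsAddFundamentalDomain L s μ) {χ : V → F} (hper : ∀ l ∈ L, Periodic χ l) {v : V}
    (hanti : Antiperiodic χ v) : ∫ x in s, χ x ∂μ = 0 := by
  have hshift : ∫ x in s, χ x ∂μ = ∫ x in v +ᵥ s, χ x ∂μ :=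
    h.setIntegral_eq (h.vadd_of_comm v) fun l x ↦ by
      rw [AddSubgroup.vadd_def, vadd_eq_add, add_comm]; exact hper l l.2 x
  have htranslate : ∫ x in v +ᵥ s, χ x ∂μ = ∫ x in s, χ (v + x) ∂μ :=
    (measurePreserving_add_left μ v).setIntegral_image_emb (measurableEmbedding_addLeft v) _ _
  have hneg : ∫ x in s, χ x ∂μ = -∫ x in s, χ x ∂μ :=
    calc ∫ x in s, χ x ∂μ = ∫ x in s, χ (v + x) ∂μ := hshift.trans htranslate
      _ = ∫ x in s, -χ x ∂μ := by congr with x; rw [add_comm, hanti]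
      _ = -∫ x in s, χ x ∂μ := integral_neg _
  have htwice : (2 : ℝ) • ∫ x in s, χ x ∂μ = 0 := by
    rw [two_smul]; nth_rw 1 [hneg]; exact neg_add_cancel _
  exact (smul_eq_zero.mp htwice).resolve_left two_ne_zero

theorem integral_periodic_mul_eq_setIntegral_mul (h : IsAddFundamentalDomain L s μ)
    {χ : V → ℂ} (hper : ∀ l ∈ L, Periodic χ l) {f : V → ℝ}
    (hint : Integrable (fun x ↦ χ x * f x) μ) {c : ℝ}
    (htile : ∀ᵐ x ∂μ, ∑' l : L, f (l +ᵥ x) = c) :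
    ∫ x, χ x * f x ∂μ = (∫ x in s, χ x ∂μ) * c := by
  have hperiodize : ∀ᵐ x ∂μ, ∑' l : L, χ (l +ᵥ x) * f (l +ᵥ x) = χ x * c := by
    filter_upwards [htile] with x hx
    calc ∑' l : L, χ (l +ᵥ x) * f (l +ᵥ x) = ∑' l : L, χ x * f (l +ᵥ x) := by
          congr with l
          rw [AddSubgroup.vadd_def, vadd_eq_add, add_comm, hper l l.2 x]
      _ = χ x * c := by rw [tsum_mul_left, ← Complex.ofReal_tsum, hx]
  rw [h.integral_eq_setIntegral_tsum hint, integral_congr_ae (ae_restrict_of_ae hperiodize),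
    integral_mul_const]

end MeasureTheory.IsAddFundamentalDomain

theorem Real.fourierChar_add_intCast (x : ℝ) (k : ℤ) : 𝐞 (x + k) = 𝐞 x := by
  rw [AddChar.map_add_eq_mul, Real.fourierChar_apply' (k : ℝ), Circle.exp_two_pi_mul_int, mul_one]

theorem Real.fourierChar_add_half (x : ℝ) : (𝐞 (x + 1 / 2) : ℂ) = -𝐞 x := by
  rw [AddChar.map_add_eq_mul, Circle.coe_mul, Real.fourierChar_apply (1 / 2),
    show ((2 * Real.pi * (1 / 2) : ℝ) : ℂ) * Complex.I = Real.pi * Complex.I by push_cast; ring,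
    Complex.exp_pi_mul_I, mul_neg_one]

section Character

variable {V : Type*} [NormedAddCommGroup V] [InnerProductSpace ℝ V]

theorem periodic_fourierChar_neg_inner {ξ l : V} (h : ∃ k : ℤ, ⟪l, ξ⟫ = k) :
    Periodic (fun x ↦ (𝐞 (-⟪x, ξ⟫) : ℂ)) l := by
  obtain ⟨k, hk⟩ := h
  intro x
  simp only [inner_add_left, hk, neg_add, ← Int.cast_neg, Real.fourierChar_add_intCast]

theorem antiperiodic_fourierChar_neg_inner {ξ : V} (hξ : ξ ≠ 0) :
    Antiperiodic (fun x ↦ (𝐞 (-⟪x, ξ⟫) : ℂ)) (-(2 * ‖ξ‖ ^ 2)⁻¹ • ξ) := by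
  have hhalf : ⟪-(2 * ‖ξ‖ ^ 2)⁻¹ • ξ, ξ⟫ = -(1 / 2) := by
    rw [real_inner_smul_left, real_inner_self_eq_norm_sq]
    field_simp [norm_ne_zero_iff.mpr hξ]
  intro x
  simp only [inner_add_left, hhalf, neg_add, neg_neg, Real.fourierChar_add_half]

end Character

section Lattice

variable {d : ℕ} (A : Matrix (Fin d) (Fin d) ℝ)

def latticeBasis (hA : IsUnit A.det) : Module.Basis (Fin d) ℝ (EuclideanSpace ℝ (Fin d)) :=
  letI := A.invertibleOfIsUnitDet hA
  (Pi.basisFun ℝ (Fin d)).map ((toLinearEquiv' A ‹_›).trans (WithLp.linearEquiv 2 ℝ _).symm)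

theorem sum_zsmul_latticeBasis (hA : IsUnit A.det) (m : Fin d → ℤ) :
    ∑ i, m i • latticeBasis A hA i = WithLp.toLp 2 (A *ᵥ fun i ↦ (m i : ℝ)) := by
  have hsum : ∑ i, (m i : ℝ) • Pi.basisFun ℝ (Fin d) i = fun i ↦ (m i : ℝ) := by
    ext j; simp [Pi.single_apply]
  simp only [latticeBasis, Module.Basis.map_apply, ← Int.cast_smul_eq_zsmul ℝ, ← map_smul,
    ← map_sum, hsum]
  rfl

theorem latticeOf_eq_span (hA : IsUnit A.det) :
    latticeOf A = span ℤ (Set.range (latticeBasis A hA)) := by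
  ext x
  rw [SetLike.mem_coe, mem_span_range_iff_exists_fun]
  constructor
  · rintro ⟨m, hm⟩
    exact ⟨m, by rw [sum_zsmul_latticeBasis, ← hm]⟩
  · rintro ⟨m, rfl⟩
    exact ⟨m, by rw [sum_zsmul_latticeBasis]⟩

theorem exists_int_inner_eq_of_mem_latticeOf (hA : IsUnit A.det) {x ξ : EuclideanSpace ℝ (Fin d)}
    (hx : x ∈ latticeOf A) (hξ : ξ ∈ latticeOf (A⁻¹)ᵀ) : ∃ k : ℤ, ⟪x, ξ⟫ = k := by
  obtain ⟨m, hm⟩ := hx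
  obtain ⟨n, hn⟩ := hξ
  refine ⟨n ⬝ᵥ m, ?_⟩
  rw [EuclideanSpace.inner_eq_star_dotProduct, hm, hn, star_trivial, dotProduct_mulVec,
    mulVec_transpose, vecMul_vecMul, nonsing_inv_mul A hA, vecMul_one]
  simp [dotProduct]

end Lattice

theorem TilesAt.tsum_vadd_eq {d : ℕ} {f : EuclideanSpace ℝ (Fin d) → ℝ}
    {L : AddSubgroup (EuclideanSpace ℝ (Fin d))} {c : ℝ} (h : TilesAt f L c) :
    ∀ᵐ x, ∑' l : L, f (l +ᵥ x) = c := by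
  filter_upwards [h] with x hx
  calc ∑' l : L, f (l +ᵥ x) = ∑' l : L, f (x - ↑(-l)) := by
        simp [AddSubgroup.vadd_def, add_comm]
    _ = c := ((Equiv.neg L).tsum_eq (fun l : L ↦ f (x - l))).trans hx.2

/-- If `f ∈ L¹(ℝ^d)` tiles with the lattice `Λ = A·ℤ^d` at level `c`,
then its Fourier transform vanishes on the dual lattice `Λ* = A^{−⊤}·ℤ^d` away from 0. -/
theorem fourier_vanishes_on_dual_lattice
    {d : ℕ} (A : Matrix (Fin d) (Fin d) ℝ) (hA : A.det ≠ 0)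
    (f : EuclideanSpace ℝ (Fin d) → ℝ) (hf : Integrable f)
    (c : ℝ) (ht : TilesAt f (latticeOf A) c) :
    ∀ ξ ∈ latticeOf (A⁻¹).transpose, ξ ≠ 0 →
      FourierTransform.fourier (fun x => (f x : ℂ)) ξ = 0 := by
  intro ξ hξ hξ0
  have hA' : IsUnit A.det := isUnit_iff_ne_zero.mpr hA
  set b := latticeBasis A hA'
  set L := (span ℤ (Set.range b)).toAddSubgroup
  have : Countable L := inferInstanceAs (Countable (span ℤ (Set.range b)))
  have hD := ZSpan.isAddFundamentalDomain' b volume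
  have htile : TilesAt f L c := by rwa [latticeOf_eq_span A hA'] at ht
  have hper : ∀ l ∈ L, Periodic (fun x ↦ (𝐞 (-⟪x, ξ⟫) : ℂ)) l := fun l hl ↦
    periodic_fourierChar_neg_inner
      (exists_int_inner_eq_of_mem_latticeOf A hA' (by rwa [latticeOf_eq_span A hA']) hξ)
  calc 𝓕 (fun x ↦ (f x : ℂ)) ξ = ∫ x, 𝐞 (-⟪x, ξ⟫) * (f x : ℂ) := rfl
    _ = (∫ x in ZSpan.fundamentalDomain b, (𝐞 (-⟪x, ξ⟫) : ℂ)) * c :=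
      hD.integral_periodic_mul_eq_setIntegral_mul hper
        ((Real.fourierIntegral_convergent_iff ξ).mpr hf.ofReal) htile.tsum_vadd_eq
    _ = 0 := by
      rw [hD.setIntegral_eq_zero_of_antiperiodic hper (antiperiodic_fourierChar_neg_inner hξ0),
        zero_mul]

end
end

section
/- Let E ⊆ ℝ² be a Lebesgue measurable set of finite measure such that for every rotation R ∈ SO(2) the indicator function 1_E tiles with the rotated lattice R(ℤ²) at level 1. Then the Fourier transform of 1_E vanishes at every nonzero point whose squared norm is a sum of two integer squares: 1̂_E(ξ) = 0 for every ξ ∈ ℝ² \ {0} with |ξ|² = m² + n² for some (m,n) ∈ ℤ² \ {(0,0)}. -/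
/-!
Rotating `(m, n)` onto `ξ` gives `R ∈ SO(2)` with `Rᵀ ξ = (m, n) ∈ ℤ²`, so `ξ` lies in the dual
lattice of `R(ℤ²)` and `x ↦ 𝐞(-⟪x, ξ⟫)` is `R(ℤ²)`-periodic. Unfolding the Fourier integral over a
fundamental domain `D` of `R(ℤ²)`, the tiling identity `∑_λ 1_E(x + λ) = 1` turns `𝓕 1_E ξ` into
`∫_D 𝐞(-⟪x, ξ⟫) dx`. This vanishes since `ξ ≠ 0`: for `v` with `𝐞(-⟪v, ξ⟫) ≠ 1`, the translate
`D - v` is again a fundamental domain, so the shift `x ↦ v + x` leaves the integral unchanged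
while multiplying it by `𝐞(-⟪v, ξ⟫)`.
-/

open MeasureTheory Convolution

noncomputable section

open LinearMap (BilinForm)
open scoped RealInnerProductSpace FourierTransform

namespace LinearMap.BilinForm

variable {R S M : Type*} [CommRing R] [Field S] [AddCommGroup M] [Algebra R S] [Module R M]
  [Module S M] [IsScalarTower R S M]

theorem mem_dualSubmodule_span_range_iff {B : BilinForm S M} {ι : Type*} {v : ι → M} {x : M} :
    x ∈ B.dualSubmodule (Submodule.span R (Set.range v)) ↔
      ∀ i, B x (v i) ∈ (1 : Submodule R S) := by
  refine ⟨fun hx i => hx _ (Submodule.subset_span ⟨i, rfl⟩), fun hv y hy => ?_⟩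
  induction hy using Submodule.span_induction with
  | mem y hy => obtain ⟨i, rfl⟩ := hy; exact hv i
  | zero => simp
  | add y z _ _ hy hz => simpa using add_mem hy hz
  | smul r y _ hy => simpa using Submodule.smul_mem _ r hy

end LinearMap.BilinForm

namespace MeasureTheory.IsAddFundamentalDomain

variable {G α E : Type*} [AddGroup G] [Countable G] [AddAction G α] [MeasurableSpace α]
  [MeasurableConstVAdd G α] [NormedAddCommGroup E] [NormedSpace ℝ E] {s : Set α} {μ : Measure α}
  [VAddInvariantMeasure G α μ]

theorem integral_eq_setIntegral_tsum_vadd (h : IsAddFundamentalDomain G s μ) {f : α → E}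
    (hf : Integrable f μ) : ∫ x, f x ∂μ = ∫ x in s, ∑' g : G, f (g +ᵥ x) ∂μ := by
  rw [h.integral_eq_tsum'' f hf, integral_tsum]
  · exact fun g => (hf.1.comp_measurePreserving (measurePreserving_vadd g μ)).restrict
  · rw [← h.lintegral_eq_tsum'' fun x => ‖f x‖ₑ]
    exact hf.2.ne

end MeasureTheory.IsAddFundamentalDomain

section DualLattice

variable {V : Type*} [NormedAddCommGroup V] [InnerProductSpace ℝ V] {L : Submodule ℤ V} {ξ : V}

theorem fourierChar_neg_inner_add_of_mem_dualSubmodule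
    (hξ : ξ ∈ BilinForm.dualSubmodule (innerₗ V) L) {g : V} (hg : g ∈ L) (x : V) :
    𝐞 (-⟪g + x, ξ⟫) = 𝐞 (-⟪x, ξ⟫) := by
  obtain ⟨k, hk⟩ := Submodule.mem_one.1 (hξ g hg)
  rw [innerₗ_apply_apply, real_inner_comm] at hk
  rw [inner_add_left, neg_add, AddChar.map_add_eq_mul, ← hk, Real.fourierChar_apply',
    eq_intCast, ← Int.cast_neg, Circle.exp_two_pi_mul_int, one_mul]

variable [MeasurableSpace V] [BorelSpace V] {μ : Measure V} [μ.IsAddLeftInvariant] [Countable L]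
  {D : Set V}

theorem MeasureTheory.IsAddFundamentalDomain.setIntegral_fourierChar_eq_zero
    (hD : IsAddFundamentalDomain L.toAddSubgroup D μ)
    (hξ : ξ ∈ BilinForm.dualSubmodule (innerₗ V) L) (hξ0 : ξ ≠ 0) :
    ∫ x in D, (𝐞 (-⟪x, ξ⟫) : ℂ) ∂μ = 0 := by
  obtain ⟨t, ht⟩ := AddChar.ne_one_iff.1 Real.fourierChar_ne_one
  set v : V := -(t / ‖ξ‖ ^ 2) • ξ
  have hv : -⟪v, ξ⟫ = t := by
    simp [v, real_inner_smul_left, hξ0]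
  have hperiodic (g : L.toAddSubgroup) (x : V) : (𝐞 (-⟪g +ᵥ x, ξ⟫) : ℂ) = 𝐞 (-⟪x, ξ⟫) :=
    congrArg _ (fourierChar_neg_inner_add_of_mem_dualSubmodule hξ g.2 x)
  have : VAddCommClass V L.toAddSubgroup V := ⟨fun v g x => add_left_comm v (g : V) x⟩
  have hD' : IsAddFundamentalDomain L.toAddSubgroup ((v + ·) ⁻¹' D) μ := by
    rw [show (v + ·) = (v +ᵥ ·) from rfl, Set.preimage_vadd]
    exact hD.vadd_of_comm _
  have hshift : ∫ x in D, (𝐞 (-⟪x, ξ⟫) : ℂ) ∂μ = 𝐞 t * ∫ x in D, (𝐞 (-⟪x, ξ⟫) : ℂ) ∂μ :=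
    calc ∫ x in D, (𝐞 (-⟪x, ξ⟫) : ℂ) ∂μ
        = ∫ x in (v + ·) ⁻¹' D, (𝐞 (-⟪v + x, ξ⟫) : ℂ) ∂μ :=
          ((measurePreserving_add_left μ v).setIntegral_preimage_emb
            (measurableEmbedding_addLeft v) _ D).symm
      _ = 𝐞 t * ∫ x in (v + ·) ⁻¹' D, (𝐞 (-⟪x, ξ⟫) : ℂ) ∂μ := by
          simp_rw [inner_add_left, neg_add, AddChar.map_add_eq_mul, Circle.coe_mul, hv]
          exact integral_const_mul _ _
      _ = 𝐞 t * ∫ x in D, (𝐞 (-⟪x, ξ⟫) : ℂ) ∂μ := by rw [hD'.setIntegral_eq hD hperiodic]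
  by_contra hI
  exact ht (Circle.coe_eq_one.1 ((mul_eq_right₀ hI).1 hshift.symm))

end DualLattice

theorem fourier_eq_zero_of_ae_hasSum_add {V E : Type*} [NormedAddCommGroup V]
    [InnerProductSpace ℝ V] [MeasurableSpace V] [BorelSpace V] [FiniteDimensional ℝ V]
    [NormedAddCommGroup E] [NormedSpace ℂ E] [CompleteSpace E] {L : Submodule ℤ V} [Countable L]
    {D : Set V} (hD : IsAddFundamentalDomain L.toAddSubgroup D) {f : V → E} (hf : Integrable f)
    {c : E} (hsum : ∀ᵐ x, HasSum (fun g : L.toAddSubgroup => f (g + x)) c) {ξ : V}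
    (hξ : ξ ∈ BilinForm.dualSubmodule (innerₗ V) L) (hξ0 : ξ ≠ 0) : 𝓕 f ξ = 0 := by
  have hintegrable : Integrable fun x => 𝐞 (-⟪x, ξ⟫) • f x := by
    simpa only [innerₗ_apply_apply] using (VectorFourier.fourierIntegral_convergent_iff
      (L := innerₗ V) Real.continuous_fourierChar continuous_inner ξ).2 hf
  calc 𝓕 f ξ = ∫ x, 𝐞 (-⟪x, ξ⟫) • f x := Real.fourier_eq f ξ
    _ = ∫ x in D, ∑' g : L.toAddSubgroup, 𝐞 (-⟪g + x, ξ⟫) • f (g + x) :=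
        hD.integral_eq_setIntegral_tsum_vadd hintegrable
    _ = ∫ x in D, (𝐞 (-⟪x, ξ⟫) : ℂ) • c := by
        refine setIntegral_congr_ae₀ hD.nullMeasurableSet ?_
        filter_upwards [hsum] with x hx _
        simp_rw [fourierChar_neg_inner_add_of_mem_dualSubmodule hξ (Subtype.prop _),
          Circle.smul_def]
        rw [tsum_const_smul'']
        exact congrArg _ hx.tsum_eq
    _ = (∫ x in D, (𝐞 (-⟪x, ξ⟫) : ℂ)) • c := integral_smul_const _ c
    _ = 0 := by rw [hD.setIntegral_fourierChar_eq_zero hξ hξ0, zero_smul]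

namespace Matrix

variable {d : ℕ} (A : Matrix (Fin d) (Fin d) ℝ) (hA : IsUnit A.det)

def columnBasis : Module.Basis (Fin d) ℝ (EuclideanSpace ℝ (Fin d)) :=
  (EuclideanSpace.basisFun (Fin d) ℝ).toBasis.map
    (A.toLinearEquiv (EuclideanSpace.basisFun (Fin d) ℝ).toBasis hA)

theorem columnBasis_apply (i : Fin d) : A.columnBasis hA i = WithLp.toLp 2 (A.col i) := by
  rw [columnBasis, Module.Basis.map_apply, toLinearEquiv_apply,
    ← toEuclideanLin_eq_toLin_orthonormal]
  simp [toLpLin_apply]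

theorem sum_zsmul_columnBasis (k : Fin d → ℤ) :
    ∑ i, k i • A.columnBasis hA i = WithLp.toLp 2 (A *ᵥ fun i => (k i : ℝ)) := by
  ext j
  simp [columnBasis_apply, mulVec, dotProduct, mul_comm]

theorem coe_span_columnBasis :
    (Submodule.span ℤ (Set.range (A.columnBasis hA)) : Set (EuclideanSpace ℝ (Fin d))) =
      latticeOf A := by
  ext x
  simp only [SetLike.mem_coe, Submodule.mem_span_range_iff_exists_fun, sum_zsmul_columnBasis]
  exact exists_congr fun k => by rw [eq_comm, WithLp.ext_iff]

theorem inner_columnBasis (ξ : EuclideanSpace ℝ (Fin d)) (i : Fin d) :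
    ⟪ξ, A.columnBasis hA i⟫ = (Aᵀ *ᵥ ξ.ofLp) i := by
  simp [columnBasis_apply, PiLp.inner_apply, mulVec, dotProduct]

end Matrix

open Matrix in
theorem exists_rotation_transpose_mulVec_eq {u v : Fin 2 → ℝ}
    (huv : u 0 ^ 2 + u 1 ^ 2 = v 0 ^ 2 + v 1 ^ 2) (hv : v ≠ 0) :
    ∃ R : Matrix (Fin 2) (Fin 2) ℝ, R * Rᵀ = 1 ∧ R.det = 1 ∧ Rᵀ *ᵥ v = u := by
  set r := v 0 ^ 2 + v 1 ^ 2
  have hr : r ≠ 0 := by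
    refine fun hr => hv (funext fun i => ?_)
    fin_cases i <;> simp <;> nlinarith [sq_nonneg (v 0), sq_nonneg (v 1)]
  set a := (u 0 * v 0 + u 1 * v 1) / r
  set b := (u 0 * v 1 - u 1 * v 0) / r
  have hab : a ^ 2 + b ^ 2 = 1 := by
    simp only [a, b]
    field_simp
    linear_combination r * huv
  have h0 : a * v 0 + b * v 1 = u 0 := by
    simp only [a, b]
    field_simp
    ring
  have h1 : -b * v 0 + a * v 1 = u 1 := by
    simp only [a, b]
    field_simp
    ring
  clear_value a b
  refine ⟨!![a, -b; b, a], ?_, ?_, ?_⟩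
  · ext i j
    fin_cases i <;> fin_cases j <;> simp [Matrix.mul_apply] <;> linarith
  · rw [Matrix.det_fin_two_of]
    linear_combination hab
  · ext i
    fin_cases i
    · simpa [mulVec, dotProduct] using h0
    · simpa [mulVec, dotProduct] using h1

theorem TilesAt.ae_hasSum_add {d : ℕ} {f : EuclideanSpace ℝ (Fin d) → ℝ}
    {L : AddSubgroup (EuclideanSpace ℝ (Fin d))} {c : ℝ} (h : TilesAt f L c) :
    ∀ᵐ x, HasSum (fun g : L => f (g + x)) c := by
  filter_upwards [h] with x ⟨hsum, htsum⟩
  let neg : L ≃ (L : Set (EuclideanSpace ℝ (Fin d))) :=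
    (Equiv.neg _).subtypeEquiv fun _ => neg_mem_iff.symm
  convert neg.hasSum_iff.2 (htsum ▸ hsum.hasSum) using 2 with g
  change f (g + x) = f (x - -(g : EuclideanSpace ℝ (Fin d)))
  rw [sub_neg_eq_add, add_comm]

/-- If `E ⊆ ℝ²` is measurable of finite measure and `1_E` tiles at
level 1 with every rotate `R(ℤ²)`, `R ∈ SO(2)`, then `∂1_E` vanishes at every nonzero
`ξ` with `|ξ|² = m² + n²` for some integers `(m,n) ≠ (0,0)`. -/
theorem steinhaus_fourier_vanishing
    (E : Set (EuclideanSpace ℝ (Fin 2))) (hE : MeasurableSet E) (hfin : volume E < ⊤)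
    (htile : ∀ R : Matrix (Fin 2) (Fin 2) ℝ, R * R.transpose = 1 → R.det = 1 →
      TilesAt (Set.indicator E fun _ => (1 : ℝ)) (latticeOf R) 1) :
    ∀ ξ : EuclideanSpace ℝ (Fin 2), ξ ≠ 0 →
      (∃ m n : ℤ, ‖ξ‖ ^ 2 = (m : ℝ) ^ 2 + (n : ℝ) ^ 2 ∧ ¬(m = 0 ∧ n = 0)) →
      FourierTransform.fourier (Set.indicator E fun _ => (1 : ℂ)) ξ = 0 := by
  rintro ξ hξ ⟨m, n, hmn, -⟩
  obtain ⟨R, hRRt, hdet, hRξ⟩ := exists_rotation_transpose_mulVec_eq (u := ![(m : ℝ), n])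
    (v := ξ.ofLp) (by simpa [EuclideanSpace.real_norm_sq_eq, Fin.sum_univ_two] using hmn.symm)
    (by simpa using hξ)
  have hR : IsUnit R.det := by rw [hdet]; exact isUnit_one
  have hdual : ξ ∈ BilinForm.dualSubmodule (innerₗ _)
      (Submodule.span ℤ (Set.range (R.columnBasis hR))) := by
    refine BilinForm.mem_dualSubmodule_span_range_iff.2 fun i => Submodule.mem_one.2 ?_
    rw [innerₗ_apply_apply, R.inner_columnBasis, hRξ]
    fin_cases i
    exacts [⟨m, rfl⟩, ⟨n, rfl⟩]
  have hsum := TilesAt.ae_hasSum_add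
    (L := (Submodule.span ℤ (Set.range (R.columnBasis hR))).toAddSubgroup)
    (by rw [Submodule.coe_toAddSubgroup, R.coe_span_columnBasis hR]; exact htile R hRRt hdet)
  have hindicator :
      (E.indicator fun _ => (1 : ℂ)) = fun y => Complex.ofReal (E.indicator (fun _ => 1) y) := by
    ext y
    by_cases hy : y ∈ E <;> simp [hy]
  rw [hindicator]
  have hintegrable := (integrable_indicator_iff hE).2 (integrableOn_const (C := (1 : ℝ)) hfin.ne)
  refine fourier_eq_zero_of_ae_hasSum_add (ZSpan.isAddFundamentalDomain' _ volume)
    hintegrable.ofReal (c := ((1 : ℝ) : ℂ)) ?_ hdual hξ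
  filter_upwards [hsum] with x hx
  exact Complex.hasSum_ofReal.2 hx

end
end

section
/- (Erdős) The natural density of the set of positive integers having a divisor in the interval (N, 2N] tends to 0 as N → ∞: for every ε > 0 there exists N₀ such that for all N ≥ N₀, limsup_{x→∞} (1/x)·#{n ≤ x : ∃ m ∈ ℕ, N < m ≤ 2N, m ∣ n} < ε. -/
/-!
Let `P` be a finite set of primes, `ω(m) = dvdCount P m` the number of `p ∈ P` dividing `m`,
and `S = invSum P = ∑_{p ∈ P} 1/p`. The Turán–Kubilius inequality
`∑_{m ≤ x} (ω(m) - S)² ≤ S (x + 2|P|)` shows that only `O(x / S)` integers `m ≤ x` deviate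
from `S` by at least a fixed fraction of `S`.

Write `n = d m` with `d ∈ (N, 2N]`. If no `p²` with `p ∈ P`, `p > w` divides `n`, then
`ω(n) ≥ ω(d) + ω(m) - w`; so when `8w ≤ S` and both `n` and `d` are typical, the cofactor
`m` is atypical (`ω(m) ≤ S/2`). Counting the `n ≤ x` that are atypical, that are divisible by
such a square (`≤ 2x/(w+1)` of them), that have an atypical `d`, or that are `d` times an atypical
`m ≤ x/d`, bounds the upper density by `132/S + 2/(w+1)` as soon as `N ≥ |P|`. Since
`∑_p 1/p` diverges, this is below any `ε` for `w`, then `P`, chosen large.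
-/

open Filter Classical

open Finset

namespace Erdos

def dvdCount (P : Finset ℕ) (m : ℕ) : ℕ := #{p ∈ P | p ∣ m}

noncomputable def invSum (P : Finset ℕ) : ℝ := ∑ p ∈ P, (p : ℝ)⁻¹

def IsDeviant (P : Finset ℕ) (c : ℝ) (m : ℕ) : Prop :=
  invSum P / c ≤ |(dvdCount P m : ℝ) - invSum P|

section TuranKubilius

variable (P : Finset ℕ)

lemma invSum_nonneg : 0 ≤ invSum P := sum_nonneg fun _ _ => by positivity

lemma sum_dvdCount (x : ℕ) : ∑ m ∈ Ioc 0 x, dvdCount P m = ∑ p ∈ P, x / p := by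
  simp only [dvdCount, card_filter]
  rw [sum_comm]
  exact sum_congr rfl fun p _ => by rw [← card_filter, Nat.Ioc_filter_dvd_card_eq_div]

lemma sum_dvdCount_sq (x : ℕ) :
    ∑ m ∈ Ioc 0 x, dvdCount P m ^ 2 = ∑ p ∈ P, ∑ q ∈ P, x / p.lcm q := by
  simp only [dvdCount, card_filter, sq, sum_mul_sum, ite_zero_mul_ite_zero, mul_one,
    ← Nat.lcm_dvd_iff]
  rw [sum_comm]
  refine sum_congr rfl fun p _ => ?_
  rw [sum_comm]
  exact sum_congr rfl fun q _ => by rw [← card_filter, Nat.Ioc_filter_dvd_card_eq_div]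

lemma sub_one_le_cast_div (x p : ℕ) : (x : ℝ) / p - 1 ≤ (x / p : ℕ) := by
  rw [← Nat.floor_div_eq_div (K := ℝ)]
  exact (Nat.sub_one_lt_floor _).le

lemma mul_invSum_sub_card_le (x : ℕ) :
    x * invSum P - #P ≤ ∑ m ∈ Ioc 0 x, (dvdCount P m : ℝ) := by
  calc x * invSum P - #P = ∑ p ∈ P, ((x : ℝ) / p - 1) := by
        simp [invSum, mul_sum, div_eq_mul_inv, sum_sub_distrib]
    _ ≤ ∑ p ∈ P, ((x / p : ℕ) : ℝ) := sum_le_sum fun p _ => sub_one_le_cast_div x p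
    _ = _ := by exact_mod_cast (sum_dvdCount P x).symm

variable {P}

lemma sum_dvdCount_sq_le (hP : ∀ p ∈ P, p.Prime) (x : ℕ) :
    ∑ m ∈ Ioc 0 x, (dvdCount P m : ℝ) ^ 2 ≤ x * invSum P ^ 2 + x * invSum P := by
  have hlcm : ∀ p ∈ P, ∀ q ∈ P,
      ((x / p.lcm q : ℕ) : ℝ) ≤
        x * ((p : ℝ)⁻¹ * (q : ℝ)⁻¹) + if p = q then x * (p : ℝ)⁻¹ else 0 := by
    intro p hp q hq
    split_ifs with hpq
    · subst hpq
      rw [Nat.lcm_self]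
      have : (0 : ℝ) ≤ x * ((p : ℝ)⁻¹ * (p : ℝ)⁻¹) := by positivity
      linarith [Nat.cast_div_le (α := ℝ) (m := x) (n := p), div_eq_mul_inv (x : ℝ) p]
    · rw [Nat.Coprime.lcm_eq_mul ((Nat.coprime_primes (hP p hp) (hP q hq)).2 hpq), add_zero]
      refine Nat.cast_div_le.trans_eq ?_
      push_cast
      ring
  calc ∑ m ∈ Ioc 0 x, (dvdCount P m : ℝ) ^ 2 = ∑ p ∈ P, ∑ q ∈ P, ((x / p.lcm q : ℕ) : ℝ) := by
        exact_mod_cast sum_dvdCount_sq P x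
    _ ≤ ∑ p ∈ P, ∑ q ∈ P,
          (x * ((p : ℝ)⁻¹ * (q : ℝ)⁻¹) + if p = q then x * (p : ℝ)⁻¹ else 0) :=
        sum_le_sum fun p hp => sum_le_sum fun q hq => hlcm p hp q hq
    _ = x * invSum P ^ 2 + x * invSum P := by
        simp [sum_add_distrib, ← mul_sum, ← sum_mul, invSum, sq]

theorem sum_sq_dvdCount_sub_invSum_le (hP : ∀ p ∈ P, p.Prime) (x : ℕ) :
    ∑ m ∈ Ioc 0 x, ((dvdCount P m : ℝ) - invSum P) ^ 2 ≤ invSum P * (x + 2 * #P) := by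
  have hexpand : ∑ m ∈ Ioc 0 x, ((dvdCount P m : ℝ) - invSum P) ^ 2 =
      ∑ m ∈ Ioc 0 x, (dvdCount P m : ℝ) ^ 2 - 2 * invSum P * ∑ m ∈ Ioc 0 x, (dvdCount P m : ℝ)
        + x * invSum P ^ 2 := by
    simp only [sub_sq, sum_add_distrib, sum_sub_distrib, sum_const, Nat.card_Ioc, tsub_zero,
      nsmul_eq_mul, mul_sum, mul_assoc, mul_comm (invSum P)]
  rw [hexpand]
  nlinarith [sum_dvdCount_sq_le hP x, mul_invSum_sub_card_le P x, invSum_nonneg P]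

theorem card_filter_isDeviant_le (hP : ∀ p ∈ P, p.Prime) (hS : 0 < invSum P) {c : ℝ}
    (hc : 0 < c) (x : ℕ) :
    (#{m ∈ Ioc 0 x | IsDeviant P c m} : ℝ) ≤ c ^ 2 * (x + 2 * #P) / invSum P := by
  set T := {m ∈ Ioc 0 x | IsDeviant P c m}
  have hmarkov : #T * (invSum P / c) ^ 2 ≤ invSum P * (x + 2 * #P) :=
    calc #T * (invSum P / c) ^ 2 ≤ ∑ m ∈ T, ((dvdCount P m : ℝ) - invSum P) ^ 2 := by
          rw [← nsmul_eq_mul]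
          refine card_nsmul_le_sum _ _ _ fun m hm => ?_
          exact (pow_le_pow_left₀ (by positivity) (mem_filter.1 hm).2 2).trans_eq (sq_abs _)
      _ ≤ ∑ m ∈ Ioc 0 x, ((dvdCount P m : ℝ) - invSum P) ^ 2 :=
          sum_le_sum_of_subset_of_nonneg (filter_subset _ _) fun _ _ _ => sq_nonneg _
      _ ≤ _ := sum_sq_dvdCount_sub_invSum_le hP x
  rw [le_div_iff₀ hS]
  calc (#T : ℝ) * invSum P = #T * (invSum P / c) ^ 2 * (c ^ 2 / invSum P) := by
        field_simp
    _ ≤ invSum P * (x + 2 * #P) * (c ^ 2 / invSum P) := by gcongr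
    _ = _ := by field_simp

end TuranKubilius

section Divisors

variable (P : Finset ℕ)

lemma dvdCount_add_le (d m : ℕ) :
    dvdCount P d + dvdCount P m ≤ dvdCount P (d * m) + #{p ∈ P | p * p ∣ d * m} := by
  simp only [dvdCount]
  rw [← card_union_add_card_inter, ← filter_or, ← filter_and]
  gcongr with p
  · exact Or.rec (Dvd.dvd.mul_right · m) (Dvd.dvd.mul_left · d)
  · exact And.rec mul_dvd_mul

lemma card_filter_mul_self_dvd_le {n w : ℕ} (hn : n ≠ 0)
    (hsq : ∀ p ∈ P, p * p ∣ n → p ≤ w) : #{p ∈ P | p * p ∣ n} ≤ w := by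
  calc #{p ∈ P | p * p ∣ n} ≤ #(Ioc 0 w) := by
        refine card_le_card fun p hp => ?_
        obtain ⟨hpP, hpn⟩ := mem_filter.1 hp
        refine mem_Ioc.2 ⟨Nat.pos_of_ne_zero ?_, hsq p hpP hpn⟩
        rintro rfl
        exact hn (by simpa using hpn)
    _ = w := by simp

lemma isDeviant_div {w d n : ℕ} (hn : n ≠ 0) (hd : d ∣ n) (hwS : 8 * w ≤ invSum P)
    (hsq : ∀ p ∈ P, p * p ∣ n → p ≤ w) (hn_typ : ¬IsDeviant P 8 n) (hd_typ : ¬IsDeviant P 4 d) :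
    IsDeviant P 2 (n / d) := by
  unfold IsDeviant at *
  have hadd := dvdCount_add_le P d (n / d)
  rw [Nat.mul_div_cancel' hd] at hadd
  have hadd' : (dvdCount P d + dvdCount P (n / d) : ℝ) ≤ dvdCount P n + w := by
    exact_mod_cast hadd.trans (by gcongr; exact card_filter_mul_self_dvd_le P hn hsq)
  rw [not_le, abs_lt] at hn_typ hd_typ
  exact (neg_le_abs _).trans' (by linarith)

end Divisors

section Counting

lemma card_filter_exists_le_sum {α β : Type*} (s : Finset α) (D : Finset β) (R : β → α → Prop)
    [∀ d, DecidablePred (R d)] [DecidablePred fun a => ∃ d ∈ D, R d a] :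
    #{a ∈ s | ∃ d ∈ D, R d a} ≤ ∑ d ∈ D, #{a ∈ s | R d a} := by
  refine (card_le_card fun a ha => ?_).trans card_biUnion_le
  obtain ⟨has, d, hd, hR⟩ := mem_filter.1 ha
  exact mem_biUnion.2 ⟨d, hd, mem_filter.2 ⟨has, hR⟩⟩

lemma card_filter_dvd_and_div_le (x d : ℕ) (Q : ℕ → Prop) [DecidablePred Q]
    [DecidablePred fun n => d ∣ n ∧ Q (n / d)] :
    #{n ∈ Ioc 0 x | d ∣ n ∧ Q (n / d)} ≤ #{m ∈ Ioc 0 (x / d) | Q m} := by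
  refine card_le_card_of_injOn (· / d) (fun n hn => ?_) (fun n₁ hn₁ n₂ hn₂ h => ?_)
  · simp only [coe_filter, Set.mem_ofPred_eq, mem_Ioc] at hn ⊢
    obtain ⟨⟨hn0, hnx⟩, hdn, hQ⟩ := hn
    exact ⟨⟨Nat.div_pos (Nat.le_of_dvd hn0 hdn) (Nat.pos_of_dvd_of_pos hdn hn0),
      Nat.div_le_div_right hnx⟩, hQ⟩
  · simp only [coe_filter, Set.mem_ofPred_eq] at hn₁ hn₂
    rw [← Nat.div_mul_cancel hn₁.2.1, ← Nat.div_mul_cancel hn₂.2.1]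
    exact congrArg (· * d) h

lemma card_filter_exists_dvd_le (D : Finset ℕ) [DecidablePred fun n => ∃ d ∈ D, d ∣ n] {N : ℕ}
    (hD : ∀ d ∈ D, N < d) (x : ℕ) :
    (#{n ∈ Ioc 0 x | ∃ d ∈ D, d ∣ n} : ℝ) ≤ #D * x / (N + 1) := by
  calc (#{n ∈ Ioc 0 x | ∃ d ∈ D, d ∣ n} : ℝ) ≤ ∑ d ∈ D, (#{n ∈ Ioc 0 x | d ∣ n} : ℝ) := by
        exact_mod_cast card_filter_exists_le_sum _ _ _
    _ ≤ ∑ _d ∈ D, (x / (N + 1) : ℝ) := sum_le_sum fun d hd => by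
        rw [Nat.Ioc_filter_dvd_card_eq_div]
        refine Nat.cast_div_le.trans (div_le_div_of_nonneg_left (by positivity) (by positivity) ?_)
        exact_mod_cast hD d hd
    _ = #D * x / (N + 1) := by rw [sum_const, nsmul_eq_mul, mul_div_assoc]

lemma card_filter_exists_mul_self_dvd_le (P : Finset ℕ) (w x : ℕ) :
    (#{n ∈ Ioc 0 x | ∃ p ∈ {p ∈ P | w < p}, p * p ∣ n} : ℝ) ≤ 2 * x / (w + 1) := by
  have hIoo : {p ∈ P | w < p} ⊆ Ioo w (P.sup id + 1) := fun p hp => by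
    obtain ⟨hpP, hwp⟩ := mem_filter.1 hp
    exact mem_Ioo.2 ⟨hwp, Nat.lt_succ_of_le (le_sup (f := id) hpP)⟩
  calc (#{n ∈ Ioc 0 x | ∃ p ∈ {p ∈ P | w < p}, p * p ∣ n} : ℝ)
      ≤ ∑ p ∈ {p ∈ P | w < p}, (#{n ∈ Ioc 0 x | p * p ∣ n} : ℝ) := by
        exact_mod_cast card_filter_exists_le_sum _ _ _
    _ = ∑ p ∈ {p ∈ P | w < p}, ((x / (p * p) : ℕ) : ℝ) := by
        simp only [Nat.Ioc_filter_dvd_card_eq_div]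
    _ ≤ ∑ p ∈ {p ∈ P | w < p}, x * ((p : ℝ) ^ 2)⁻¹ := sum_le_sum fun p _ =>
        Nat.cast_div_le.trans_eq (by push_cast; ring)
    _ ≤ ∑ p ∈ Ioo w (P.sup id + 1), x * ((p : ℝ) ^ 2)⁻¹ :=
        sum_le_sum_of_subset_of_nonneg hIoo fun _ _ _ => by positivity
    _ ≤ x * (2 / (w + 1)) := by
        rw [← mul_sum]
        gcongr
        exact sum_Ioo_inv_sq_le _ _
    _ = 2 * x / (w + 1) := by ring

variable {P : Finset ℕ} (hP : ∀ p ∈ P, p.Prime) (hS : 0 < invSum P)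
include hP hS

lemma card_filter_exists_isDeviant_dvd_le {N : ℕ} (hN : #P ≤ N) (x : ℕ) :
    (#{n ∈ Ioc 0 x | ∃ d ∈ {d ∈ Ioc N (2 * N) | IsDeviant P 4 d}, d ∣ n} : ℝ)
      ≤ 64 * x / invSum P := by
  have hD : (#{d ∈ Ioc N (2 * N) | IsDeviant P 4 d} : ℝ) ≤ 64 * N / invSum P :=
    calc _ ≤ (#{d ∈ Ioc 0 (2 * N) | IsDeviant P 4 d} : ℝ) := by
          exact_mod_cast card_le_card (filter_subset_filter _ (Ioc_subset_Ioc_left N.zero_le))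
      _ ≤ 4 ^ 2 * ((2 * N : ℕ) + 2 * #P) / invSum P :=
          card_filter_isDeviant_le hP hS four_pos _
      _ ≤ 64 * N / invSum P := by
          have : (#P : ℝ) ≤ N := by exact_mod_cast hN
          gcongr ?_ / _
          push_cast
          linarith
  have := card_filter_exists_dvd_le {d ∈ Ioc N (2 * N) | IsDeviant P 4 d}
    (fun d hd => (mem_Ioc.1 (mem_filter.1 hd).1).1) x
  -- the two sides differ only in their `Decidable` instances
  refine (Eq.trans_le (by congr!) this).trans ?_
  calc _ ≤ 64 * N / invSum P * x / (N + 1) := by gcongr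
    _ = 64 * x / invSum P * (N / (N + 1)) := by ring
    _ ≤ 64 * x / invSum P * 1 := by
        gcongr
        exact (div_le_one (by positivity)).2 (by linarith)
    _ = 64 * x / invSum P := mul_one _

lemma card_filter_exists_dvd_isDeviant_div_le (N x : ℕ) :
    (#{n ∈ Ioc 0 x | ∃ d ∈ Ioc N (2 * N), d ∣ n ∧ IsDeviant P 2 (n / d)} : ℝ)
      ≤ 4 * (x + 2 * N * #P) / invSum P := by
  have hNx : (N : ℝ) * (x / (N + 1)) ≤ x := by
    rw [mul_div_assoc', div_le_iff₀ (by positivity)]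
    nlinarith
  calc _ ≤ ∑ d ∈ Ioc N (2 * N), (#{n ∈ Ioc 0 x | d ∣ n ∧ IsDeviant P 2 (n / d)} : ℝ) := by
        exact_mod_cast card_filter_exists_le_sum _ _ _
    _ ≤ ∑ d ∈ Ioc N (2 * N), (#{m ∈ Ioc 0 (x / d) | IsDeviant P 2 m} : ℝ) :=
        sum_le_sum fun d _ => by exact_mod_cast card_filter_dvd_and_div_le x d _
    _ ≤ ∑ _d ∈ Ioc N (2 * N), 2 ^ 2 * (x / (N + 1) + 2 * #P) / invSum P :=
        sum_le_sum fun d hd => by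
          refine (card_filter_isDeviant_le hP hS two_pos _).trans ?_
          gcongr
          refine Nat.cast_div_le.trans
            (div_le_div_of_nonneg_left (by positivity) (by positivity) ?_)
          exact_mod_cast (mem_Ioc.1 hd).1
    _ = 4 * (N * (x / (N + 1)) + 2 * N * #P) / invSum P := by
        rw [sum_const, Nat.card_Ioc, two_mul, Nat.add_sub_cancel, nsmul_eq_mul]
        ring
    _ ≤ 4 * (x + 2 * N * #P) / invSum P := by gcongr

theorem card_filter_exists_dvd_Ioc_le {w N : ℕ} (hwS : 8 * w ≤ invSum P) (hN : #P ≤ N) (x : ℕ) :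
    (#{n ∈ Icc 1 x | ∃ m ∈ Ioc N (2 * N), m ∣ n} : ℝ)
      ≤ (132 / invSum P + 2 / (w + 1)) * x + (128 + 8 * N) * #P / invSum P := by
  have hcover : {n ∈ Icc 1 x | ∃ m ∈ Ioc N (2 * N), m ∣ n} ⊆
      {n ∈ Ioc 0 x | IsDeviant P 8 n} ∪ {n ∈ Ioc 0 x | ∃ p ∈ {p ∈ P | w < p}, p * p ∣ n} ∪
        {n ∈ Ioc 0 x | ∃ d ∈ {d ∈ Ioc N (2 * N) | IsDeviant P 4 d}, d ∣ n} ∪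
        {n ∈ Ioc 0 x | ∃ d ∈ Ioc N (2 * N), d ∣ n ∧ IsDeviant P 2 (n / d)} := by
    intro n hn
    simp only [mem_filter] at hn
    obtain ⟨hnx, d, hd, hdn⟩ := hn
    have hn0 : n ∈ Ioc 0 x := mem_Ioc.2 (mem_Icc.1 hnx)
    simp only [mem_union, mem_filter, hn0, true_and]
    by_contra! h
    obtain ⟨⟨⟨hn_typ, hsq⟩, hd_typ⟩, hm_typ⟩ := h
    refine hm_typ d hd hdn (isDeviant_div P (mem_Ioc.1 hn0).1.ne' hdn hwS (fun p hp hpn => ?_)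
      hn_typ fun h4 => hd_typ d ⟨hd, h4⟩ hdn)
    exact not_lt.1 fun hwp => hsq p ⟨hp, hwp⟩ hpn
  calc _ ≤ ((#{n ∈ Ioc 0 x | IsDeviant P 8 n} + #{n ∈ Ioc 0 x | ∃ p ∈ {p ∈ P | w < p}, p * p ∣ n}
        + #{n ∈ Ioc 0 x | ∃ d ∈ {d ∈ Ioc N (2 * N) | IsDeviant P 4 d}, d ∣ n}
        + #{n ∈ Ioc 0 x | ∃ d ∈ Ioc N (2 * N), d ∣ n ∧ IsDeviant P 2 (n / d)} : ℕ) : ℝ) := by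
        refine Nat.cast_le.2 ((card_le_card hcover).trans ?_)
        grw [card_union_le, card_union_le, card_union_le]
    _ ≤ 8 ^ 2 * (x + 2 * #P) / invSum P + 2 * x / (w + 1) + 64 * x / invSum P
        + 4 * (x + 2 * N * #P) / invSum P := by
        push_cast
        gcongr
        · exact card_filter_isDeviant_le hP hS (by norm_num) x
        · exact card_filter_exists_mul_self_dvd_le P w x
        · exact card_filter_exists_isDeviant_dvd_le hP hS hN x
        · exact card_filter_exists_dvd_isDeviant_div_le hP hS N x
    _ = _ := by ring

end Counting

lemma limsup_div_le_of_le_mul_add {f : ℕ → ℝ} {a b : ℝ} (hf0 : ∀ x, 0 ≤ f x)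
    (hf : ∀ x, f x ≤ a * x + b) : limsup (fun x : ℕ => f x / x) atTop ≤ a := by
  have hlim : Tendsto (fun x : ℕ => a + b / x) atTop (nhds a) := by
    simpa using tendsto_const_nhds.add (tendsto_const_div_atTop_nhds_zero_nat b)
  rw [← hlim.limsup_eq]
  refine limsup_le_limsup ?_
    (isCoboundedUnder_le_of_le atTop fun x => div_nonneg (hf0 x) x.cast_nonneg)
    hlim.isBoundedUnder_le
  filter_upwards [eventually_gt_atTop 0] with x hx
  rw [div_le_iff₀ (by positivity), add_mul, div_mul_cancel₀ _ (by positivity)]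
  linarith [hf x]

lemma tendsto_invSum_primesBelow : Tendsto (fun n : ℕ => invSum n.primesBelow) atTop atTop := by
  have h := (not_summable_iff_tendsto_nat_atTop_of_nonneg fun n =>
    Set.indicator_nonneg (fun p _ => by positivity) n).1 not_summable_one_div_on_primes
  refine h.congr fun n => ?_
  simp [invSum, Nat.primesBelow, sum_filter, Set.indicator_apply]

end Erdos

open Erdos

/-- **Erdős.** The natural density of the set of positive integers having
a divisor in `(N, 2N]` tends to 0 as `N → ∞`: for every `ε > 0` there is `N₀` such that
for all `N ≥ N₀` the upper density of `{n : ∃ m, N < m ≤ 2N, m ∣ n}` is less than `ε`. -/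
theorem erdos_density_of_divisors_in_dyadic_interval :
    ∀ ε : ℝ, 0 < ε → ∃ N₀ : ℕ, ∀ N : ℕ, N₀ ≤ N →
      Filter.limsup
        (fun x : ℕ =>
          (((Finset.Icc 1 x).filter fun n => ∃ m ∈ Finset.Ioc N (2 * N), m ∣ n).card : ℝ)
            / x)
        Filter.atTop < ε := by
  intro ε hε
  obtain ⟨w, hw⟩ := ((tendsto_one_div_add_atTop_nhds_zero_nat.const_mul 2).eventually
    (gt_mem_nhds (by linarith : 2 * (0 : ℝ) < ε / 2))).exists
  obtain ⟨K, hKw, hKpos, hKε⟩ := ((tendsto_invSum_primesBelow.eventually_ge_atTop (8 * w)).and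
    ((tendsto_invSum_primesBelow.eventually_gt_atTop 0).and
      (((tendsto_const_nhds (x := (132 : ℝ))).div_atTop tendsto_invSum_primesBelow).eventually
        (gt_mem_nhds (half_pos hε) : ∀ᶠ y in nhds (0 : ℝ), y < ε / 2)))).exists
  refine ⟨#K.primesBelow, fun N hN => ?_⟩
  calc _ ≤ 132 / invSum K.primesBelow + 2 / (w + 1) :=
        limsup_div_le_of_le_mul_add (fun x => by positivity) (card_filter_exists_dvd_Ioc_le
          (fun p hp => Nat.prime_of_mem_primesBelow hp) hKpos hKw hN)
    _ < ε := by
        linarith [show (2 : ℝ) / (w + 1) = 2 * (1 / (w + 1)) by ring]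
end

section
/- For every ε > 0 there is a constant c_ε > 0 such that for every N ≥ 1 the union of the arithmetic progressions ((N+j)/N)·ℤ, j = 1, …, N, contains at least c_ε · N^{2−ε} points in the interval [0, 2N]: #( [0, 2N] ∩ ⋃_{j=1}^{N} {k(N+j)/N : k ∈ ℤ} ) ≥ c_ε · N^{2−ε}. -/
/-!
The `N²` pairs `(j, k)` with `1 ≤ j, k ≤ N` give the points `(N + j) k / N ∈ [0, 2N]`. A numerator
`m = (N + j) k ≤ 2N²` determines the pair through the divisor `N + j` of `m`, so each point is
hit at most `d(m)` times, and the divisor bound `d(m) ≪_δ m^δ` with `δ = ε / 2` leaves at least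
`N² / (C N^ε)` distinct points.

The divisor bound is proved prime by prime in `d(n) = ∏ (a_p + 1)`: once `p^δ ≥ 2` we have
`a_p + 1 ≤ 2^{a_p} ≤ (p^δ)^{a_p}`, and each of the boundedly many smaller primes costs at most a
constant factor.
-/

open Finset

lemma exists_add_one_le_mul_pow {r : ℝ} (hr : 1 < r) :
    ∃ C : ℝ, 1 ≤ C ∧ ∀ a : ℕ, (a : ℝ) + 1 ≤ C * r ^ a := by
  have hr' : 0 < r - 1 := sub_pos.mpr hr
  refine ⟨1 + (r - 1)⁻¹, le_add_of_nonneg_right (inv_nonneg.mpr hr'.le), fun a => ?_⟩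
  have hbernoulli := one_add_mul_sub_le_pow (by linarith : -1 ≤ r) a
  have hone : 1 ≤ r ^ a := one_le_pow₀ hr.le
  have ha : (a : ℝ) ≤ (r - 1)⁻¹ * r ^ a := by
    rw [inv_mul_eq_div, le_div_iff₀ hr']
    linarith
  linarith

lemma add_one_le_ite_mul_rpow_pow {δ C : ℝ} (hδ : 0 < δ)
    (hC : ∀ a : ℕ, (a : ℝ) + 1 ≤ C * ((2 : ℝ) ^ δ) ^ a) {p : ℕ} (hp : 2 ≤ p) (a : ℕ) :
    (a : ℝ) + 1 ≤ (if p < ⌈(2 : ℝ) ^ δ⁻¹⌉₊ then C else 1) * ((p : ℝ) ^ δ) ^ a := by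
  split_ifs with hsmall
  · calc (a : ℝ) + 1 ≤ C * ((2 : ℝ) ^ δ) ^ a := hC a
      _ ≤ C * ((p : ℝ) ^ δ) ^ a := by
        have : 0 ≤ C := by linarith [hC 0]
        gcongr
        exact_mod_cast hp
  · have hlarge : (2 : ℝ) ^ δ⁻¹ ≤ p := (Nat.ceil_le.mp (not_lt.mp hsmall))
    have h2 : (2 : ℝ) ≤ (p : ℝ) ^ δ := by
      calc (2 : ℝ) = ((2 : ℝ) ^ δ⁻¹) ^ δ := by
            rw [← Real.rpow_mul zero_le_two, inv_mul_cancel₀ hδ.ne', Real.rpow_one]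
        _ ≤ (p : ℝ) ^ δ := by gcongr
    calc (a : ℝ) + 1 ≤ 2 ^ a := by exact_mod_cast Nat.lt_two_pow_self
      _ ≤ ((p : ℝ) ^ δ) ^ a := by gcongr
      _ = 1 * ((p : ℝ) ^ δ) ^ a := (one_mul _).symm

lemma rpow_eq_prod_primeFactors {n : ℕ} (hn : n ≠ 0) (δ : ℝ) :
    (n : ℝ) ^ δ = ∏ p ∈ n.primeFactors, ((p : ℝ) ^ δ) ^ n.factorization p := by
  conv_lhs => rw [Nat.prod_primeFactors_pow_factorization hn]
  push_cast
  rw [← Real.finsetProd_rpow _ _ (fun p _ => by positivity)]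
  exact prod_congr rfl fun p _ => (Real.rpow_pow_comm p.cast_nonneg δ _).symm

theorem exists_card_divisors_le_mul_rpow {δ : ℝ} (hδ : 0 < δ) :
    ∃ C : ℝ, 0 < C ∧ ∀ n : ℕ, n ≠ 0 → (#n.divisors : ℝ) ≤ C * (n : ℝ) ^ δ := by
  obtain ⟨C, hC1, hC⟩ := exists_add_one_le_mul_pow (Real.one_lt_rpow one_lt_two hδ)
  set B := ⌈(2 : ℝ) ^ δ⁻¹⌉₊
  refine ⟨C ^ B, by positivity, fun n hn => ?_⟩
  have hweights : ∏ p ∈ n.primeFactors, (if p < B then C else 1) ≤ C ^ B := by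
    rw [prod_ite, prod_const, prod_const_one, mul_one]
    refine pow_le_pow_right₀ hC1 ((card_le_card fun p hp => ?_).trans (card_range B).le)
    exact mem_range.mpr (mem_filter.mp hp).2
  calc (#n.divisors : ℝ) = ∏ p ∈ n.primeFactors, ((n.factorization p : ℝ) + 1) := by
        rw [Nat.card_divisors hn]; push_cast; rfl
    _ ≤ ∏ p ∈ n.primeFactors,
          (if p < B then C else 1) * ((p : ℝ) ^ δ) ^ n.factorization p :=
        prod_le_prod (fun _ _ => by positivity) fun p hp =>
          add_one_le_ite_mul_rpow_pow hδ hC (Nat.prime_of_mem_primeFactors hp).two_le _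
    _ = (∏ p ∈ n.primeFactors, (if p < B then C else 1)) * (n : ℝ) ^ δ := by
        rw [prod_mul_distrib, rpow_eq_prod_primeFactors hn]
    _ ≤ C ^ B * (n : ℝ) ^ δ := by gcongr

lemma exists_card_divisors_le_mul_rpow_of_le_two_mul_sq {ε : ℝ} (hε : 0 < ε) :
    ∃ D : ℝ, 0 < D ∧ ∀ N m : ℕ, m ≠ 0 → m ≤ 2 * N ^ 2 →
      (#m.divisors : ℝ) ≤ D * (N : ℝ) ^ ε := by
  obtain ⟨C, hC, hdiv⟩ := exists_card_divisors_le_mul_rpow (half_pos hε)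
  refine ⟨C * 2 ^ (ε / 2), by positivity, fun N m hm hmN => ?_⟩
  calc (#m.divisors : ℝ) ≤ C * (m : ℝ) ^ (ε / 2) := hdiv m hm
    _ ≤ C * (2 * (N : ℝ) ^ 2) ^ (ε / 2) := by gcongr; exact_mod_cast hmN
    _ = C * 2 ^ (ε / 2) * (N : ℝ) ^ ε := by
      rw [Real.mul_rpow zero_le_two (by positivity), ← Real.rpow_natCast,
        ← Real.rpow_mul N.cast_nonneg]
      ring_nf

lemma card_filter_mul_eq_le_card_divisors (s : Finset (ℕ × ℕ)) {m : ℕ} (hm : m ≠ 0) :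
    #{q ∈ s | q.1 * q.2 = m} ≤ #m.divisors := by
  calc #{q ∈ s | q.1 * q.2 = m}
      ≤ #m.divisorsAntidiagonal :=
        card_le_card fun q hq => Nat.mem_divisorsAntidiagonal.mpr ⟨(mem_filter.mp hq).2, hm⟩
    _ = #m.divisors := by rw [← Nat.map_div_right_divisors, card_map]

lemma card_le_mul_card_image_mul {s : Finset (ℕ × ℕ)} {B : ℝ}
    (hB : ∀ q ∈ s, q.1 * q.2 ≠ 0 ∧ (#(q.1 * q.2).divisors : ℝ) ≤ B) :
    (#s : ℝ) ≤ B * #(s.image fun q => q.1 * q.2) := by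
  rw [card_eq_sum_card_fiberwise fun q hq => mem_image_of_mem (fun q => q.1 * q.2) hq,
    Nat.cast_sum, mul_comm, ← nsmul_eq_mul, ← sum_const]
  refine sum_le_sum fun m hm => ?_
  obtain ⟨q, hq, rfl⟩ := mem_image.mp hm
  exact (Nat.cast_le.mpr (card_filter_mul_eq_le_card_divisors s (hB q hq).1)).trans (hB q hq).2

def progressionUnion (N : ℕ) : Set ℝ :=
  Set.Icc (0 : ℝ) (2 * N) ∩
    ⋃ j ∈ Finset.Icc 1 N, {x : ℝ | ∃ k : ℤ, x = k * (((N : ℝ) + j) / N)}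

-- The point `k (N + j) / N` of `progressionUnion N` is recorded by the pair `(N + j, k)`.
def progressionNumerators (N : ℕ) : Finset ℕ :=
  (Icc (N + 1) (2 * N) ×ˢ Icc 1 N).image fun q => q.1 * q.2

lemma card_Icc_prod_Icc (N : ℕ) : #(Icc (N + 1) (2 * N) ×ˢ Icc 1 N) = N ^ 2 := by
  rw [card_product, Nat.card_Icc, Nat.card_Icc, Nat.add_sub_cancel, sq]
  congr 1
  omega

lemma mul_mem_Icc_one_two_mul_sq {N : ℕ} {q : ℕ × ℕ} (hq : q ∈ Icc (N + 1) (2 * N) ×ˢ Icc 1 N) :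
    q.1 * q.2 ∈ Set.Icc 1 (2 * N ^ 2) := by
  simp only [mem_product, mem_Icc] at hq
  constructor
  · nlinarith
  · nlinarith

lemma sq_le_mul_card_progressionNumerators {N : ℕ} {B : ℝ}
    (hB : ∀ m : ℕ, m ≠ 0 → m ≤ 2 * N ^ 2 → (#m.divisors : ℝ) ≤ B) :
    (N : ℝ) ^ 2 ≤ B * #(progressionNumerators N) := by
  have := card_le_mul_card_image_mul (B := B) fun q hq =>
    have hq' := mul_mem_Icc_one_two_mul_sq hq
    ⟨Nat.one_le_iff_ne_zero.mp hq'.1, hB _ (Nat.one_le_iff_ne_zero.mp hq'.1) hq'.2⟩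
  rwa [card_Icc_prod_Icc, Nat.cast_pow] at this

lemma progressionUnion_subset_image_Icc (N : ℕ) :
    progressionUnion N ⊆ (fun m : ℤ => (m : ℝ) / N) '' Set.Icc 0 (2 * N ^ 2) := by
  rintro x ⟨⟨hx0, hx2N⟩, hx⟩
  obtain ⟨j, hj, k, rfl⟩ := Set.mem_iUnion₂.mp hx
  have hN : (0 : ℝ) < N := by exact_mod_cast (mem_Icc.mp hj).1.trans (mem_Icc.mp hj).2
  have hx : ((k * (N + j) : ℤ) : ℝ) = k * (((N : ℝ) + j) / N) * N := by
    push_cast; field_simp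
  refine ⟨k * (N + j), ⟨?_, ?_⟩, ?_⟩
  · exact_mod_cast hx ▸ mul_nonneg hx0 hN.le
  · have : ((k * (N + j) : ℤ) : ℝ) ≤ ((2 * N ^ 2 : ℤ) : ℝ) := by
      rw [hx]; push_cast; nlinarith
    exact_mod_cast this
  · exact (div_eq_iff hN.ne').mpr hx

lemma finite_progressionUnion (N : ℕ) : (progressionUnion N).Finite :=
  ((Set.finite_Icc _ _).image _).subset (progressionUnion_subset_image_Icc N)

lemma div_mem_progressionUnion {N m : ℕ} (hm : m ∈ progressionNumerators N) :
    (m : ℝ) / N ∈ progressionUnion N := by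
  obtain ⟨⟨a, k⟩, hq, rfl⟩ := mem_image.mp hm
  simp only [mem_product, mem_Icc] at hq
  obtain ⟨⟨ha1, ha2⟩, hk1, hk2⟩ := hq
  obtain ⟨j, rfl⟩ := Nat.exists_eq_add_of_lt ha1
  have hN : (0 : ℝ) < N := by exact_mod_cast (by omega : 0 < N)
  refine ⟨⟨by positivity, ?_⟩, Set.mem_iUnion₂.mpr ⟨j + 1, mem_Icc.mpr ⟨by omega, by omega⟩, k, ?_⟩⟩
  · rw [div_le_iff₀ hN]
    have : (N + j + 1) * k ≤ 2 * N * N := by nlinarith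
    exact_mod_cast this
  · push_cast; ring

lemma card_progressionNumerators_le_natCard (N : ℕ) :
    #(progressionNumerators N) ≤ Nat.card (progressionUnion N) := by
  rcases N.eq_zero_or_pos with rfl | hN
  · simp [progressionNumerators]
  have hinj : Function.Injective fun m : ℕ => (m : ℝ) / N := fun a b hab => by
    have hN' : (N : ℝ) ≠ 0 := by positivity
    simpa [div_left_inj' hN'] using hab
  calc #(progressionNumerators N)
      = Nat.card ((progressionNumerators N).image fun m : ℕ => (m : ℝ) / N) := by
        rw [Nat.card_eq_finsetCard, card_image_of_injective _ hinj]
    _ ≤ Nat.card (progressionUnion N) := by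
        refine Nat.card_mono (finite_progressionUnion N) ?_
        intro x hx
        obtain ⟨m, hm, rfl⟩ := mem_image.mp hx
        exact div_mem_progressionUnion hm

/-- For every `ε > 0` there is `c_ε > 0` such that for every `N ≥ 1`
the union of the arithmetic progressions `((N+j)/N)·ℤ`, `j = 1, …, N`, has at least
`c_ε · N^{2−ε}` points in `[0, 2N]`. -/
theorem union_of_progressions_many_points (ε : ℝ) (hε : 0 < ε) :
    ∃ c : ℝ, 0 < c ∧ ∀ N : ℕ, 1 ≤ N →
      c * (N : ℝ) ^ ((2 : ℝ) - ε) ≤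
        (Nat.card ↥(Set.Icc (0 : ℝ) (2 * N) ∩
          ⋃ j ∈ Finset.Icc 1 N, {x : ℝ | ∃ k : ℤ, x = k * (((N : ℝ) + j) / N)}) : ℝ) := by
  obtain ⟨D, hD, hdiv⟩ := exists_card_divisors_le_mul_rpow_of_le_two_mul_sq hε
  refine ⟨D⁻¹, inv_pos.mpr hD, fun N hN => ?_⟩
  have hN0 : (0 : ℝ) < N := by exact_mod_cast hN
  have hsq := sq_le_mul_card_progressionNumerators (hdiv N)
  calc D⁻¹ * (N : ℝ) ^ ((2 : ℝ) - ε) = (N : ℝ) ^ 2 / (D * (N : ℝ) ^ ε) := by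
        rw [Real.rpow_sub hN0, Real.rpow_two]; field_simp
    _ ≤ #(progressionNumerators N) := by
        rw [div_le_iff₀ (by positivity)]; linarith
    _ ≤ Nat.card (progressionUnion N) := by
        exact_mod_cast card_progressionNumerators_le_natCard N
end
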